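/- arXiv:1109.5074 — 6 statements merged into one kernel-verified Lean document; each statement's English description precedes it below -/
import Mathlib

section
/- Let A be a matrix in SL(m,ℤ). Then there exists a positive integer n such that the trace of A^n is at least m. -/
/-!
Let `λᵢ` be the complex eigenvalues of `A`, so that `∏ λᵢ = det A = 1` and `tr Aⁿ = ∑ λᵢⁿ`.
By recurrence in the compact torus `Circleᵐ` there are `n > 0` for which every `(λᵢ / |λᵢ|)ⁿ`
is as close to `1` as we like, so `Re tr Aⁿ ≥ (1 - ε) ∑ |λᵢ|ⁿ ≥ (1 - ε) m`, the last step by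
AM–GM since `∏ |λᵢ|ⁿ = 1`. With `ε m < 1` the integer `tr Aⁿ` exceeds `m - 1`.
-/

open Polynomial Filter Topology

namespace Matrix

variable {ι K : Type*} [Fintype ι] [DecidableEq ι] [Field K] [IsAlgClosed K]

lemma card_roots_charpoly (M : Matrix ι ι K) : M.charpoly.roots.card = Fintype.card ι := by
  rw [IsAlgClosed.card_roots_eq_natDegree, charpoly_natDegree_eq_dim]

lemma charpoly_eq_prod_roots (M : Matrix ι ι K) :
    M.charpoly = (M.charpoly.roots.map (X - C ·)).prod :=
  (IsAlgClosed.splits _).eq_prod_roots_of_monic M.charpoly_monic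

lemma det_sub_scalar_eq_prod_roots_charpoly (M : Matrix ι ι K) (c : K) :
    (M - scalar ι c).det = (M.charpoly.roots.map (· - c)).prod := calc
  _ = (-1) ^ Fintype.card ι * (scalar ι c - M).det := by rw [← neg_sub, det_neg]
  _ = (-1) ^ Fintype.card ι * (M.charpoly.roots.map (c - ·)).prod := by
    rw [← eval_charpoly, charpoly_eq_prod_roots, eval_multiset_prod, Multiset.map_map]
    simp
  _ = ((M.charpoly.roots.map (c - ·)).map Neg.neg).prod := by
    rw [Multiset.prod_map_neg, Multiset.card_map, card_roots_charpoly]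
  _ = _ := by simp [Multiset.map_map]

lemma det_aeval_eq_prod_roots_charpoly (M : Matrix ι ι K) (p : K[X]) :
    (aeval M p).det = (M.charpoly.roots.map p.eval).prod := by
  -- Writing `p = a ∏ (X - ζ)`, both sides become `aᵐ ∏_ζ ∏_λ (λ - ζ)`.
  have hp : C p.leadingCoeff * (p.roots.map (X - C ·)).prod = p :=
    C_leadingCoeff_mul_prod_multiset_X_sub_C IsAlgClosed.card_roots_eq_natDegree
  have heval (x : K) : p.eval x = p.leadingCoeff * (p.roots.map (x - ·)).prod := by
    conv_lhs => rw [← hp]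
    simp [eval_multiset_prod, Multiset.map_map]
  let f : K[X] →* K := detMonoidHom.comp (aeval M).toMonoidHom
  have hC (a : K) : f (C a) = a ^ Fintype.card ι := by simp [f, algebraMap_eq_diagonal]
  have hX_sub_C (x : K) : f (X - C x) = (M.charpoly.roots.map (· - x)).prod := by
    rw [← det_sub_scalar_eq_prod_roots_charpoly]
    simp [f, algebraMap_eq_diagonal, scalar_apply, Pi.algebraMap_def]
  change f p = _
  conv_lhs => rw [← hp, map_mul, map_multiset_prod, Multiset.map_map, hC, Function.comp_def]
  simp only [hX_sub_C, heval]
  rw [Multiset.prod_map_mul, Multiset.prod_map_prod_map, Multiset.map_const',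
    Multiset.prod_replicate, card_roots_charpoly]

lemma charpoly_pow_eq_prod_roots_charpoly (M : Matrix ι ι K) (n : ℕ) :
    (M ^ n).charpoly = ((M.charpoly.roots.map (· ^ n)).map (X - C ·)).prod := by
  refine Polynomial.funext fun c => ?_
  have h := M.det_aeval_eq_prod_roots_charpoly (C c - X ^ n)
  simp only [map_sub, aeval_C, map_pow, aeval_X, eval_sub, eval_C, eval_pow, eval_X] at h
  rw [eval_charpoly, eval_multiset_prod]
  simp only [Multiset.map_map, Function.comp_def, eval_sub, eval_X, eval_C]
  exact h

lemma trace_pow_eq_sum_roots_charpoly (M : Matrix ι ι K) (n : ℕ) :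
    (M ^ n).trace = (M.charpoly.roots.map (· ^ n)).sum := by
  rw [trace_eq_sum_roots_charpoly, charpoly_pow_eq_prod_roots_charpoly,
    roots_multiset_prod_X_sub_C]

end Matrix

lemma exists_pos_pow_mem_of_mem_nhds_one {G : Type*} [Group G] [TopologicalSpace G]
    [IsTopologicalGroup G] [CompactSpace G] [FirstCountableTopology G] (g : G) {U : Set G}
    (hU : U ∈ 𝓝 1) : ∃ n, 0 < n ∧ g ^ n ∈ U := by
  obtain ⟨x, φ, hφ, hx⟩ := CompactSpace.tendsto_subseq (g ^ ·)
  have h : Tendsto (fun k => g ^ φ (k + 1) * (g ^ φ k)⁻¹) atTop (𝓝 1) := by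
    simpa using (hx.comp (tendsto_add_atTop_nat 1)).mul hx.inv
  obtain ⟨k, hk⟩ := (h.eventually hU).exists
  have hlt : φ k < φ (k + 1) := hφ k.lt_succ_self
  exact ⟨φ (k + 1) - φ k, Nat.sub_pos_of_lt hlt, by rwa [pow_sub g hlt.le]⟩

lemma Complex.exists_pos_pow_re_ge (s : Finset ℂ) {ε : ℝ} (hε : 0 < ε) :
    ∃ n, 0 < n ∧ ∀ z ∈ s, (1 - ε) * ‖z‖ ^ n ≤ (z ^ n).re := by
  let u : s → Circle := fun z => Circle.exp (arg z)
  have hU : {v : s → Circle | ∀ z, 1 - ε < (v z : ℂ).re} ∈ 𝓝 1 := by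
    have hre : Continuous fun w : Circle => (w : ℂ).re :=
      Complex.continuous_re.comp continuous_subtype_val
    rw [nhds_pi]
    exact Filter.eventually_pi fun _ => (hre.tendsto 1).eventually (lt_mem_nhds (by simp [hε]))
  obtain ⟨n, hn, hun⟩ := exists_pos_pow_mem_of_mem_nhds_one u hU
  refine ⟨n, hn, fun z hz => ?_⟩
  have hpolar : z ^ n = (‖z‖ ^ n : ℝ) * ((u ^ n) ⟨z, hz⟩ : ℂ) := by
    simp [u, Circle.coe_exp, ← mul_pow, Complex.norm_mul_exp_arg_mul_I]
  rw [hpolar, Complex.re_ofReal_mul, mul_comm]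
  exact mul_le_mul_of_nonneg_left (hun ⟨z, hz⟩).le (by positivity)

lemma Multiset.card_le_sum_of_prod_eq_one {s : Multiset ℝ} (hs : ∀ x ∈ s, 0 < x)
    (h : s.prod = 1) : (s.card : ℝ) ≤ s.sum := by
  have hlog : (s.map Real.log).sum = 0 := by
    rw [← Real.log_multiset_prod fun x hx => (hs x hx).ne', h, Real.log_one]
  have := Multiset.sum_map_le_sum_map Real.log (· - 1)
    fun x hx => Real.log_le_sub_one_of_pos (hs x hx)
  simp [Multiset.sum_map_sub] at this
  linarith

lemma Complex.exists_pos_pow_sum_re_gt (σ : Multiset ℂ) (hσ : σ.prod = 1) :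
    ∃ n, 0 < n ∧ (σ.card : ℝ) - 1 < (σ.map (· ^ n)).sum.re := by
  set m : ℝ := Nat.cast σ.card
  set ε : ℝ := 1 / (m + 1)
  have hm : 0 ≤ m := by positivity
  have hεm : ε * m < 1 := by
    rw [div_mul_eq_mul_div, one_mul, div_lt_one (by linarith)]
    linarith
  have hε1 : 0 ≤ 1 - ε := by
    rw [sub_nonneg, div_le_one (by linarith)]
    linarith
  obtain ⟨n, hn, hre⟩ := Complex.exists_pos_pow_re_ge σ.toFinset (by positivity : 0 < ε)
  refine ⟨n, hn, ?_⟩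
  have hne : ∀ z ∈ σ, z ≠ 0 := fun z hz h0 => by
    simp [Multiset.prod_eq_zero (h0 ▸ hz)] at hσ
  have hnorm : (σ.map (‖·‖)).prod = 1 := by
    simpa [hσ] using (map_multiset_prod (normHom : ℂ →*₀ ℝ) σ).symm
  have hpow : m ≤ (σ.map (‖·‖ ^ n)).sum := by
    simpa using Multiset.card_le_sum_of_prod_eq_one (s := σ.map (‖·‖ ^ n))
      (by simpa using fun z hz => pow_pos (norm_pos_iff.2 (hne z hz)) n)
      (by rw [Multiset.prod_map_pow, hnorm, one_pow])
  calc
    m - 1 < (1 - ε) * m := by linarith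
    _ ≤ (1 - ε) * (σ.map (‖·‖ ^ n)).sum := by gcongr
    _ = (σ.map fun z => (1 - ε) * ‖z‖ ^ n).sum := Multiset.sum_map_mul_left.symm
    _ ≤ (σ.map fun z => (z ^ n).re).sum :=
      Multiset.sum_map_le_sum_map _ _ fun z hz => hre z (Multiset.mem_toFinset.2 hz)
    _ = _ := by
      simpa [Multiset.map_map] using (map_multiset_sum Complex.reAddGroupHom (σ.map (· ^ n))).symm

/-- If `A ∈ SL(m, ℤ)`, then there is `n > 0` with `tr(Aⁿ) ≥ m`. -/
theorem trace_pow_ge_of_SL (m : ℕ) (A : Matrix.SpecialLinearGroup (Fin m) ℤ) :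
    ∃ n : ℕ, 0 < n ∧ (m : ℤ) ≤ ((A : Matrix (Fin m) (Fin m) ℤ) ^ n).trace := by
  set B : Matrix (Fin m) (Fin m) ℂ := (A : Matrix (Fin m) (Fin m) ℤ).map (Int.castRingHom ℂ)
  have hdet : B.charpoly.roots.prod = 1 := by
    rw [← Matrix.det_eq_prod_roots_charpoly]
    simp [B, ← Int.cast_det]
  obtain ⟨n, hn, hre⟩ := Complex.exists_pos_pow_sum_re_gt _ hdet
  refine ⟨n, hn, ?_⟩
  have htrace : ((((A : Matrix (Fin m) (Fin m) ℤ) ^ n).trace : ℤ) : ℂ) = (B ^ n).trace := by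
    rw [← Matrix.map_pow, ← AddMonoidHom.map_trace]
    rfl
  rw [B.card_roots_charpoly, Fintype.card_fin, ← Matrix.trace_pow_eq_sum_roots_charpoly,
    ← htrace, Complex.intCast_re] at hre
  have : (m : ℤ) - 1 < ((A : Matrix (Fin m) (Fin m) ℤ) ^ n).trace := by exact_mod_cast hre
  omega
end

section
/- Let f be a homeomorphism of a compact metric space X with the shadowing property, and suppose X is expansive. Then the periodic points of f are dense in the nonwandering set of f. -/
open Topology

/-- `f` has the shadowing property: every `δ`-pseudo-orbit is `ε`-shadowed by a true orbit. -/
def ShadowingProperty {X : Type*} [MetricSpace X] (f : X ≃ₜ X) : Prop :=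
  ∀ ε > (0 : ℝ), ∃ δ > (0 : ℝ), ∀ x : ℤ → X,
    (∀ n : ℤ, dist (f (x n)) (x (n + 1)) < δ) →
    ∃ y : X, ∀ n : ℤ, dist ((f.toEquiv ^ n) y) (x n) < ε

/-- `f` is expansive with some expansivity constant `c > 0`. -/
def Expansive {X : Type*} [MetricSpace X] (f : X ≃ₜ X) : Prop :=
  ∃ c > (0 : ℝ), ∀ x y : X,
    (∀ n : ℤ, dist ((f.toEquiv ^ n) x) ((f.toEquiv ^ n) y) ≤ c) → x = y

/-- `x` is a nonwandering point of `f`. -/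
def IsNonWandering {X : Type*} [TopologicalSpace X] (f : X → X) (x : X) : Prop :=
  ∀ U ∈ 𝓝 x, ∃ n : ℕ, 0 < n ∧ (f^[n] '' U ∩ U).Nonempty

/-!
Near a nonwandering point `x` there is a point `u` returning close to itself, `f^[n] u ≈ u ≈ x`.
Repeating the orbit segment `u, f u, …, f^[n-1] u` forever is a periodic pseudo-orbit, and a true
orbit shadowing it is `n`-periodic: the orbits of `y` and `f^[n] y` both shadow the same sequence,
so they stay within twice the shadowing error of each other, and expansivity forces them to agree.
-/

theorem IsNonWandering.exists_iterate_near {X : Type*} [PseudoMetricSpace X] {f : X → X} {x : X}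
    (hx : IsNonWandering f x) {r : ℝ} (hr : 0 < r) :
    ∃ n, 0 < n ∧ ∃ u, dist u x < r ∧ dist (f^[n] u) x < r := by
  obtain ⟨n, hn, _, ⟨u, hu, rfl⟩, hnu⟩ := hx (Metric.ball x r) (Metric.ball_mem_nhds x hr)
  exact ⟨n, hn, u, hu, hnu⟩

section PseudoOrbit

variable {X : Type*} (f : X → X) (n : ℕ) (u : X)

def periodicPseudoOrbit (k : ℤ) : X :=
  f^[k.natMod n] u

@[simp]
theorem periodicPseudoOrbit_zero : periodicPseudoOrbit f n u 0 = u := by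
  simp [periodicPseudoOrbit, Int.natMod]

theorem periodicPseudoOrbit_add_period (k : ℤ) :
    periodicPseudoOrbit f n u (k + n) = periodicPseudoOrbit f n u k := by
  simp [periodicPseudoOrbit, Int.natMod]

variable [PseudoMetricSpace X] in
/-- The only jump of the pseudo-orbit is the return from `f^[n] u` to `u`. -/
theorem dist_periodicPseudoOrbit_succ_le (hn : 0 < n) (k : ℤ) :
    dist (f (periodicPseudoOrbit f n u k)) (periodicPseudoOrbit f n u (k + 1)) ≤
      dist (f^[n] u) u := by
  have hmod : 0 ≤ k % n ∧ k % n < n :=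
    ⟨Int.emod_nonneg k (by omega), Int.emod_lt_of_pos k (by omega)⟩
  have hsucc : (k + 1) % n = (k % n + 1) % n := (Int.emod_add_emod k n 1).symm
  simp only [periodicPseudoOrbit, Int.natMod]
  rw [← Function.iterate_succ_apply' f]
  by_cases hlt : k % n + 1 < n
  · have : (k + 1) % n = k % n + 1 := by rw [hsucc]; exact Int.emod_eq_of_lt (by omega) hlt
    rw [this, show (k % n + 1).toNat = (k % n).toNat.succ by omega, dist_self]
    exact dist_nonneg
  · have : (k + 1) % n = 0 := by rw [hsucc, show k % n + 1 = n by omega, Int.emod_self]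
    rw [this, show (k % n).toNat.succ = n by omega]
    rfl

end PseudoOrbit

theorem Equiv.Perm.zpow_apply_eq_self_of_shadows_periodic {X : Type*} [PseudoMetricSpace X]
    (σ : Equiv.Perm X) {c η : ℝ}
    (hc : ∀ x y : X, (∀ n : ℤ, dist ((σ ^ n) x) ((σ ^ n) y) ≤ c) → x = y)
    (hη : 2 * η ≤ c) {z : ℤ → X} {p : ℤ} (hz : ∀ k, z (k + p) = z k) {y : X}
    (hy : ∀ k, dist ((σ ^ k) y) (z k) < η) :
    (σ ^ p) y = y := by
  refine hc _ _ fun k => ?_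
  rw [← Equiv.Perm.mul_apply, ← zpow_add]
  calc dist ((σ ^ (k + p)) y) ((σ ^ k) y)
      ≤ dist ((σ ^ (k + p)) y) (z (k + p)) + dist ((σ ^ k) y) (z k) := by
        rw [hz k]; exact dist_triangle_right _ _ _
    _ ≤ c := by linarith [hy (k + p), hy k]

theorem periodicPoints_dense_in_nonwandering_general {X : Type*} [MetricSpace X]
    (f : X ≃ₜ X) (hsh : ShadowingProperty f) (hexp : Expansive f) :
    {x : X | IsNonWandering (⇑f) x} ⊆
      closure {p : X | ∃ k : ℕ, 0 < k ∧ (⇑f)^[k] p = p} := by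
  obtain ⟨c, hc, hexpc⟩ := hexp
  intro x hx
  refine Metric.mem_closure_iff.2 fun ε hε => ?_
  obtain ⟨η, hη, hηε, hηc⟩ : ∃ η > 0, η ≤ ε / 2 ∧ 2 * η ≤ c :=
    ⟨min (ε / 2) (c / 2), by positivity, min_le_left _ _,
      by linarith [min_le_right (ε / 2) (c / 2)]⟩
  obtain ⟨δ, hδ, hshδ⟩ := hsh η hη
  obtain ⟨r, hr, hrδ, hrε⟩ : ∃ r > 0, 2 * r ≤ δ ∧ r ≤ ε / 2 :=
    ⟨min (δ / 2) (ε / 2), by positivity, by linarith [min_le_left (δ / 2) (ε / 2)],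
      min_le_right _ _⟩
  obtain ⟨n, hn, u, hux, hnux⟩ := hx.exists_iterate_near hr
  have hreturn : dist (f^[n] u) u < δ := by linarith [dist_triangle_right (f^[n] u) u x]
  obtain ⟨y, hy⟩ := hshδ (periodicPseudoOrbit f n u) fun k =>
    (dist_periodicPseudoOrbit_succ_le f n u hn k).trans_lt hreturn
  have hyper : (⇑f)^[n] y = y :=
    Equiv.Perm.zpow_apply_eq_self_of_shadows_periodic f.toEquiv hexpc hηc
      (periodicPseudoOrbit_add_period f n u) hy
  refine ⟨y, ⟨n, hn, hyper⟩, ?_⟩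
  have hyu : dist y u < η := by simpa using hy 0
  linarith [dist_triangle_left x y u, dist_comm y u]

/-- A homeomorphism of a compact metric space with the shadowing property
which is expansive has its periodic points dense in the nonwandering set. -/
theorem periodicPoints_dense_in_nonwandering {X : Type*} [MetricSpace X] [CompactSpace X]
    (f : X ≃ₜ X) (hsh : ShadowingProperty f) (hexp : Expansive f) :
    {x : X | IsNonWandering (⇑f) x} ⊆
      closure {p : X | ∃ k : ℕ, 0 < k ∧ (⇑f)^[k] p = p} :=
  periodicPoints_dense_in_nonwandering_general f hsh hexp
end

section
/- Let f: X → X be a homeomorphism of a compact metric space with the shadowing property. Then the closure of the recurrent set of f equals the chain recurrent set of f. -/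
/-- `x` is recurrent: it belongs to its own ω-limit set. -/
def IsRecurrentPt {X : Type*} [MetricSpace X] (f : X → X) (x : X) : Prop :=
  ∀ ε > (0 : ℝ), ∀ N : ℕ, ∃ n : ℕ, N ≤ n ∧ dist (f^[n] x) x < ε

/-- `x` is chain recurrent: for every `ε > 0` there is a finite `ε`-pseudo-orbit from `x`
to itself. -/
def IsChainRecurrentPt {X : Type*} [MetricSpace X] (f : X → X) (x : X) : Prop :=
  ∀ ε > (0 : ℝ), ∃ n : ℕ, 1 ≤ n ∧ ∃ c : ℕ → X, c 0 = x ∧ c n = x ∧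
    ∀ i < n, dist (f (c i)) (c (i + 1)) < ε

open Set Function Metric

section Birkhoff

variable {X : Type*} [TopologicalSpace X] {g : X → X}

theorem mapsTo_closure_range_iterate (hg : Continuous g) (y : X) :
    MapsTo g (closure (range fun m => g^[m] y)) (closure (range fun m => g^[m] y)) :=
  MapsTo.closure (fun _ ⟨m, hm⟩ => hm ▸ ⟨m + 1, iterate_succ_apply' g m y⟩) hg

theorem exists_minimal_closed_mapsTo [CompactSpace X] {S : Set X} (hS : IsClosed S)
    (hne : S.Nonempty) (hgS : MapsTo g S S) :
    ∃ M ⊆ S, Minimal (fun T : Set X => T.Nonempty ∧ IsClosed T ∧ MapsTo g T T) M := by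
  refine zorn_superset_nonempty {T | T.Nonempty ∧ IsClosed T ∧ MapsTo g T T}
    (fun C hC hchain hCne => ?_) S ⟨hne, hS, hgS⟩
  have := hCne.to_subtype
  refine ⟨⋂₀ C, ⟨?_, isClosed_sInter fun T hT => (hC hT).2.1,
    fun z hz => mem_sInter.2 fun T hT => (hC hT).2.2 (hz T hT)⟩,
    fun T hT => sInter_subset_of_mem hT⟩
  exact IsCompact.nonempty_sInter_of_directed_nonempty_isCompact_isClosed
    (IsChain.directedOn (r := fun S T : Set X => S ⊇ T) hchain.symm) (fun T hT => (hC hT).1)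
    (fun T hT => (hC hT).2.1.isCompact) fun T hT => (hC hT).2.1

end Birkhoff

-- For `0 < n`, `k % n ∈ [0, n)`, so `toNat` loses nothing.
def periodicExtension {α : Type*} (c : ℕ → α) (n : ℕ) (k : ℤ) : α :=
  c (k % n).toNat

theorem periodicExtension_natCast_mul {α : Type*} (c : ℕ → α) (n m : ℕ) :
    periodicExtension c n (n * m : ℕ) = c 0 := by
  simp [periodicExtension]

section Recurrence

variable {X : Type*} [MetricSpace X]

theorem IsRecurrentPt.of_mem_minimal {g : X → X} (hg : Continuous g) {M : Set X}
    (hM : Minimal (fun T : Set X => T.Nonempty ∧ IsClosed T ∧ MapsTo g T T) M) {z : X}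
    (hz : z ∈ M) : IsRecurrentPt g z := by
  intro ε hε N
  set tail := closure (range fun m => g^[m] (g^[N] z))
  have htail_sub : tail ⊆ M := hM.prop.2.1.closure_subset_iff.2 <|
    range_subset_iff.2 fun m => hM.prop.2.2.iterate m (hM.prop.2.2.iterate N hz)
  have htail : tail.Nonempty ∧ IsClosed tail ∧ MapsTo g tail tail :=
    ⟨(range_nonempty _).closure, isClosed_closure, mapsTo_closure_range_iterate hg _⟩
  have hz_tail : z ∈ tail := (hM.eq_of_subset htail htail_sub).symm ▸ hz
  obtain ⟨_, ⟨m, rfl⟩, hd⟩ := Metric.mem_closure_iff.1 hz_tail ε hε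
  exact ⟨m + N, by omega, by rw [iterate_add_apply, dist_comm]; exact hd⟩

theorem exists_isRecurrentPt_mem_closure_range_iterate [CompactSpace X] {g : X → X}
    (hg : Continuous g) (y : X) :
    ∃ z ∈ closure (range fun m => g^[m] y), IsRecurrentPt g z := by
  obtain ⟨M, hM_sub, hM⟩ := exists_minimal_closed_mapsTo isClosed_closure
    (range_nonempty _).closure (mapsTo_closure_range_iterate hg y)
  obtain ⟨z, hz⟩ := hM.prop.1
  exact ⟨z, hM_sub hz, .of_mem_minimal hg hM hz⟩

theorem IsRecurrentPt.of_iterate {f : X → X} {n : ℕ} (hn : 0 < n) {x : X}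
    (hx : IsRecurrentPt f^[n] x) : IsRecurrentPt f x := by
  intro ε hε N
  obtain ⟨m, hm, hd⟩ := hx ε hε N
  exact ⟨n * m, hm.trans (Nat.le_mul_of_pos_left m hn), by rwa [iterate_mul]⟩

theorem IsRecurrentPt.isChainRecurrentPt {f : X → X} {x : X} (hx : IsRecurrentPt f x) :
    IsChainRecurrentPt f x := by
  intro ε hε
  obtain ⟨n, hn, hreturn⟩ := hx ε hε 1
  refine ⟨n, hn, fun i => if i = n then x else f^[i] x, by simp, by simp,
    fun i hi => ?_⟩
  dsimp only
  rw [if_neg (by omega : i ≠ n), ← iterate_succ_apply' f]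
  split_ifs with h
  · subst h
    exact hreturn
  · simpa using hε

theorem isClosed_setOf_isChainRecurrentPt {f : X → X} (hf : Continuous f) :
    IsClosed {x | IsChainRecurrentPt f x} := by
  classical
  refine isClosed_of_closure_subset fun x hx ε hε => ?_
  obtain ⟨δ, hδ, hfδ⟩ := Metric.continuous_iff.1 hf x (ε / 3) (by positivity)
  obtain ⟨y, hy, hxy⟩ := Metric.mem_closure_iff.1 hx (min δ (ε / 3)) (by positivity)
  rw [dist_comm] at hxy
  obtain ⟨n, hn, c, hc0, hcn, hstep⟩ := hy (ε / 3) (by positivity)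
  -- reroute the chain through `x` wherever it visits `y`
  set r : X → X := fun z => if z = y then x else z
  have hr : ∀ z, dist (f (r z)) (f z) < ε / 3 ∧ dist z (r z) < ε / 3 := by
    intro z
    by_cases hz : z = y
    · subst hz
      simp only [r, if_pos rfl]
      exact ⟨(dist_comm _ _).trans_lt (hfδ z (hxy.trans_le (min_le_left _ _))),
        hxy.trans_le (min_le_right _ _)⟩
    · simpa [r, hz] using hε
  refine ⟨n, hn, r ∘ c, by simp [r, hc0], by simp [r, hcn], fun i hi => ?_⟩
  calc dist (f (r (c i))) (r (c (i + 1)))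
      ≤ dist (f (r (c i))) (f (c i)) + dist (f (c i)) (c (i + 1))
          + dist (c (i + 1)) (r (c (i + 1))) := dist_triangle4 _ _ _ _
    _ < ε := by linarith [hr (c i), hr (c (i + 1)), hstep i hi]

theorem dist_periodicExtension_lt {f : X → X} {δ : ℝ} {n : ℕ} (hn : 0 < n) {c : ℕ → X}
    (hcn : c n = c 0) (hstep : ∀ i < n, dist (f (c i)) (c (i + 1)) < δ) (k : ℤ) :
    dist (f (periodicExtension c n k)) (periodicExtension c n (k + 1)) < δ := by
  have hk : 0 ≤ k % (n : ℤ) := Int.emod_nonneg k (by omega)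
  have hkn : k % (n : ℤ) < n := Int.emod_lt_of_pos k (by omega)
  set i := (k % (n : ℤ)).toNat
  have hi : i < n := by omega
  have hsucc : ((k + 1) % (n : ℤ)).toNat = (i + 1) % n := by
    rw [← Int.toNat_natCast ((i + 1) % n)]
    push_cast
    rw [Int.toNat_of_nonneg hk, Int.emod_add_emod]
  have hwrap : c ((i + 1) % n) = c (i + 1) := by
    rcases (Nat.succ_le_of_lt hi).lt_or_eq with h | h
    · rw [Nat.mod_eq_of_lt h]
    · rw [show i + 1 = n from h, Nat.mod_self, hcn]
  rw [periodicExtension, periodicExtension, hsucc, hwrap]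
  exact hstep i hi

theorem IsChainRecurrentPt.mem_closure_setOf_isRecurrentPt [CompactSpace X] {f : X ≃ₜ X}
    (hsh : ShadowingProperty f) {x : X} (hx : IsChainRecurrentPt f x) :
    x ∈ closure {x | IsRecurrentPt f x} := by
  refine Metric.mem_closure_iff.2 fun ε hε => ?_
  obtain ⟨δ, hδ, hshadow⟩ := hsh (ε / 2) (by positivity)
  obtain ⟨n, hn, c, hc0, hcn, hstep⟩ := hx δ hδ
  obtain ⟨y, hy⟩ := hshadow (periodicExtension c n)
    (dist_periodicExtension_lt hn (hcn.trans hc0.symm) hstep)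
  have hclose : ∀ m, dist ((f^[n])^[m] y) x < ε / 2 := fun m => by
    have := hy (n * m : ℕ)
    rwa [periodicExtension_natCast_mul, hc0, zpow_natCast, ← Equiv.Perm.iterate_eq_pow,
      iterate_mul] at this
  obtain ⟨z, hz_orbit, hz⟩ := exists_isRecurrentPt_mem_closure_range_iterate
    (f.continuous.iterate n) y
  have hzx : z ∈ closedBall x (ε / 2) := closure_minimal
    (range_subset_iff.2 fun m => (hclose m).le) isClosed_closedBall hz_orbit
  exact ⟨z, hz.of_iterate hn, by rw [dist_comm]; linarith [mem_closedBall.1 hzx]⟩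

end Recurrence

/-- For a homeomorphism of a compact metric space with the shadowing
property, the closure of the recurrent set equals the chain recurrent set. -/
theorem closure_recurrent_eq_chainRecurrent {X : Type*} [MetricSpace X] [CompactSpace X]
    (f : X ≃ₜ X) (hsh : ShadowingProperty f) :
    closure {x : X | IsRecurrentPt (⇑f) x} = {x : X | IsChainRecurrentPt (⇑f) x} := by
  refine (closure_minimal ?_ (isClosed_setOf_isChainRecurrentPt f.continuous)).antisymm ?_
  · exact fun _ hx => IsRecurrentPt.isChainRecurrentPt hx
  · exact fun _ hx => IsChainRecurrentPt.mem_closure_setOf_isRecurrentPt hsh hx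
end

section
/- Let f be a transitive non-invertible local homeomorphism of the circle S¹. Then f is topologically conjugate to a linear expanding map E_d: x ↦ dx (mod 1) with |d| ≥ 2. -/
/-
A lift `F : ℝ → ℝ` of `f` satisfies `F (x + 1) = F x + d` for an integer `d`, the degree. Since `f`
is a local homeomorphism, `F` is an open map, hence injective and strictly monotone; `|d| = 1` would
make `f` bijective, so `|d| ≥ 2`. Then `H x = lim F^[k] x / d ^ k` exists (the increments are
`O(|d|⁻ᵏ)`), is continuous and monotone, and satisfies `H (x + 1) = H x + 1` and `H ∘ F = d * H`, so
it descends to a continuous surjection `h` with `h ∘ f = d • h`. If `H` were constant on an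
interval, `h` would be constant on an open arc, which a dense orbit visits twice; the `h`-image of
that orbit would then be eventually periodic, hence finite, and yet dense in the circle. So `H` is
strictly monotone and `h` is a homeomorphism.
-/

open Set Function Filter Topology

local notation "𝕊" => AddCircle (1 : ℝ)

local instance : Fact ((0 : ℝ) < 1) := ⟨one_pos⟩

instance AddCircle.infinite {p : ℝ} [Fact (0 < p)] : Infinite (AddCircle p) :=
  (AddCircle.equivIco p 0).infinite_iff.mpr (Ico_infinite (by simpa using Fact.out)).to_subtype

theorem Continuous.injective_of_isOpenMap {X Y : Type*} [ConditionallyCompleteLinearOrder X]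
    [DenselyOrdered X] [TopologicalSpace X] [OrderTopology X] [LinearOrder Y] [TopologicalSpace Y]
    [OrderTopology Y] [DenselyOrdered Y] [NoMinOrder Y] [NoMaxOrder Y] {F : X → Y}
    (hc : Continuous F) (ho : IsOpenMap F) : Injective F := by
  intro a b hab
  by_contra hne
  wlog hlt : a < b generalizing a b
  · exact this hab.symm (Ne.symm hne) ((not_lt.1 hlt).lt_of_ne (Ne.symm hne))
  obtain ⟨c, hc, hext⟩ := exists_Ioo_extr_on_Icc hlt hc.continuousOn hab
  have hU := ho (Ioo a b) isOpen_Ioo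
  have hFc : F c ∈ F '' Ioo a b := mem_image_of_mem F hc
  rcases hext with hmin | hmax
  · have : F '' Ioo a b ⊆ Ici (F c) := image_subset_iff.2 fun x hx => hmin (Ioo_subset_Icc_self hx)
    simpa using interior_maximal this hU hFc
  · have : F '' Ioo a b ⊆ Iic (F c) := image_subset_iff.2 fun x hx => hmax (Ioo_subset_Icc_self hx)
    simpa using interior_maximal this hU hFc

theorem map_add_int_mul {R : Type*} [CommRing R] {F : R → R} {d : R}
    (h : ∀ x, F (x + 1) = F x + d) (n : ℤ) (x : R) : F (x + n) = F x + n * d := by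
  have hper : Periodic (fun x => F x - d * x) 1 := fun x => by simp only [h]; ring
  have := hper.int_mul n x
  simp only [mul_one] at this
  linear_combination this

theorem surjective_of_map_add_one {F : ℝ → ℝ} (hF : Continuous F) {d : ℤ} (hd : d ≠ 0)
    (h : ∀ x, F (x + 1) = F x + d) : Surjective F := by
  intro y
  set k : ℤ := ⌈|y - F 0|⌉
  have hk : |y - F 0| ≤ k := Int.le_ceil _
  have hdd : (1 : ℝ) ≤ d * d := by
    exact_mod_cast (by nlinarith [Int.one_le_abs hd, abs_mul_abs_self d] : (1 : ℤ) ≤ d * d)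
  have hshift := map_add_int_mul h
  refine mem_range_of_exists_le_of_exists_ge hF ⟨(-d * k : ℤ), ?_⟩ ⟨(d * k : ℤ), ?_⟩
  · rw [← zero_add ((-d * k : ℤ) : ℝ), hshift]
    push_cast
    nlinarith [abs_le.mp hk, abs_nonneg (y - F 0)]
  · rw [← zero_add ((d * k : ℤ) : ℝ), hshift]
    push_cast
    nlinarith [abs_le.mp hk, abs_nonneg (y - F 0)]

section IterateDivPow

variable {F : ℝ → ℝ} {d : ℤ}

theorem iterate_map_add_int_mul (h : ∀ x, F (x + 1) = F x + d) (k : ℕ) (n : ℤ) (x : ℝ) :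
    F^[k] (x + n) = F^[k] x + n * d ^ k := by
  induction k with
  | zero => simp
  | succ k ih =>
    rw [iterate_succ_apply', iterate_succ_apply', ih, ← Int.cast_pow, ← Int.cast_mul,
      map_add_int_mul h]
    push_cast
    ring

theorem monotone_iterate_div_pow (hmono : Monotone F ∨ Antitone F)
    (h : ∀ x, F (x + 1) = F x + d) (k : ℕ) : Monotone fun x => F^[k] x / d ^ k := by
  induction k with
  | zero => intro x y hxy; simpa using hxy
  | succ k ih =>
    have hsucc : (fun x => F^[k + 1] x / d ^ (k + 1)) = fun x => F^[k] (F x) / d ^ k / d := by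
      simp only [iterate_succ_apply, pow_succ, div_div]
    rw [hsucc]
    rcases hmono with hF | hF
    · have hd : (0 : ℝ) ≤ d := by linarith [h 0, hF (by norm_num : (0 : ℝ) ≤ 0 + 1)]
      exact (ih.comp hF).div_const hd
    · have hd : (d : ℝ) ≤ 0 := by linarith [h 0, hF (by norm_num : (0 : ℝ) ≤ 0 + 1)]
      exact fun x y hxy => div_le_div_of_nonpos_of_le hd (ih.comp_antitone hF hxy)

theorem exists_tendsto_iterate_div_pow (hc : Continuous F) (h : ∀ x, F (x + 1) = F x + d)
    (hd : 1 < |d|) :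
    ∃ H : ℝ → ℝ, Continuous H ∧ ∀ x, Tendsto (fun k => F^[k] x / d ^ k) atTop (𝓝 (H x)) := by
  set g : ℕ → ℝ → ℝ := fun k x => F^[k] x / d ^ k with hg
  have hd' : (1 : ℝ) < |(d : ℝ)| := by exact_mod_cast hd
  have hd0 : (d : ℝ) ≠ 0 := abs_pos.mp (one_pos.trans hd')
  have hper : Periodic (fun x => F x - d * x) 1 := fun x => by simp only [h]; ring
  obtain ⟨C, hC⟩ := (hper.compact_of_continuous one_ne_zero (by fun_prop)).isBounded.exists_norm_le
  have hdiff : ∀ k x, ‖g (k + 1) x - g k x‖ ≤ C * |(d : ℝ)|⁻¹ ^ k := by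
    intro k x
    have hstep : g (k + 1) x - g k x = (F (F^[k] x) - d * F^[k] x) / d ^ (k + 1) := by
      simp only [hg, iterate_succ_apply']
      field_simp
      ring
    have hC0 : 0 ≤ C := (norm_nonneg _).trans (hC _ (mem_range_self 0))
    rw [hstep, norm_div, norm_pow, Real.norm_eq_abs, inv_pow, ← div_eq_mul_inv]
    calc ‖F (F^[k] x) - d * F^[k] x‖ / |(d : ℝ)| ^ (k + 1)
        ≤ C / |(d : ℝ)| ^ (k + 1) := by gcongr; exact hC _ (mem_range_self _)
      _ ≤ C / |(d : ℝ)| ^ k := by gcongr; exacts [hd'.le, k.le_succ]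
  have hsum : Summable fun k => C * |(d : ℝ)|⁻¹ ^ k :=
    (summable_geometric_of_lt_one (by positivity) (inv_lt_one_of_one_lt₀ hd')).mul_left C
  refine ⟨fun x => x + ∑' k, (g (k + 1) x - g k x),
    continuous_id.add (continuous_tsum (fun k => by fun_prop) hsum hdiff), fun x => ?_⟩
  refine (((hsum.of_norm_bounded (hdiff · x)).hasSum.tendsto_sum_nat).const_add x).congr fun N => ?_
  rw [Finset.sum_range_sub (g · x)]
  simp [hg]

theorem exists_monotone_semiconj_mul (hc : Continuous F) (hmono : Monotone F ∨ Antitone F)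
    (h : ∀ x, F (x + 1) = F x + d) (hd : 1 < |d|) :
    ∃ H : ℝ → ℝ, Continuous H ∧ Monotone H ∧ (∀ x, H (x + 1) = H x + 1) ∧
      ∀ x, H (F x) = d * H x := by
  obtain ⟨H, hHc, hH⟩ := exists_tendsto_iterate_div_pow hc h hd
  have hd0 : (d : ℝ) ≠ 0 := by exact_mod_cast abs_pos.mp (one_pos.trans hd)
  refine ⟨H, hHc, fun x y hxy => le_of_tendsto_of_tendsto' (hH x) (hH y)
    fun k => monotone_iterate_div_pow hmono h k hxy, fun x => ?_, fun x => ?_⟩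
  · refine tendsto_nhds_unique ((hH (x + 1)).congr fun k => ?_) ((hH x).add_const 1)
    have := iterate_map_add_int_mul h k 1 x
    rw [Int.cast_one, one_mul] at this
    rw [this, add_div, div_self (pow_ne_zero k hd0)]
  · refine tendsto_nhds_unique (hH (F x)) ?_
    refine (((tendsto_add_atTop_iff_nat 1).mpr (hH x)).const_mul (d : ℝ)).congr fun k => ?_
    rw [iterate_succ_apply, pow_succ]
    field_simp

end IterateDivPow

theorem finite_range_iterate_of_iterate_eq {α : Type*} {g : α → α} {y : α} {m n : ℕ}
    (hmn : m < n) (h : g^[m] y = g^[n] y) : (range fun k => g^[k] y).Finite := by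
  refine ((finite_Iio n).image fun k => g^[k] y).subset ?_
  rintro _ ⟨k, rfl⟩
  rcases lt_or_ge k m with hk | hk
  · exact ⟨k, hk.trans hmn, rfl⟩
  have hper : IsPeriodicPt g (n - m) (g^[m] y) := by
    rw [IsPeriodicPt, IsFixedPt, ← iterate_add_apply, Nat.sub_add_cancel hmn.le, h]
  refine ⟨(k - m) % (n - m) + m, ?_, ?_⟩
  · have := Nat.mod_lt (k - m) (Nat.sub_pos_of_lt hmn)
    simp only [mem_Iio]
    omega
  · simp only
    rw [iterate_add_apply, hper.iterate_mod_apply, ← iterate_add_apply, Nat.sub_add_cancel hk]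

theorem DenseRange.exists_lt_iterate_mem {X : Type*} [TopologicalSpace X] [T1Space X]
    [∀ x : X, (𝓝[≠] x).NeBot] {f : X → X} {x₀ : X} (hx₀ : DenseRange fun n : ℕ => f^[n] x₀)
    {U : Set X} (hU : IsOpen U) (hne : U.Nonempty) :
    ∃ m n, m < n ∧ f^[m] x₀ ∈ U ∧ f^[n] x₀ ∈ U := by
  obtain ⟨_, hmU, m, rfl⟩ := hx₀.inter_open_nonempty U hU hne
  obtain ⟨_, hnU, ⟨n, rfl⟩, hnT⟩ :=
    (hx₀.sdiff_finite ((finite_Iic m).image fun k => f^[k] x₀)).inter_open_nonempty U hU hne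
  exact ⟨m, n, lt_of_not_ge fun hnm => hnT ⟨n, hnm, rfl⟩, hmU, hnU⟩

theorem Function.Semiconj.exists_ne_of_denseRange_iterate {X Y : Type*} [TopologicalSpace X]
    [T1Space X] [∀ x : X, (𝓝[≠] x).NeBot] [TopologicalSpace Y] [T1Space Y] [Infinite Y]
    {h : X → Y} {f : X → X} {g : Y → Y} (hsemi : Semiconj h f g) (hc : Continuous h)
    (hs : Surjective h) {x₀ : X} (hx₀ : DenseRange fun n : ℕ => f^[n] x₀) {U : Set X}
    (hU : IsOpen U) (hne : U.Nonempty) : ∃ x ∈ U, ∃ y ∈ U, h x ≠ h y := by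
  obtain ⟨m, n, hmn, hm, hn⟩ := hx₀.exists_lt_iterate_mem hU hne
  refine ⟨_, hm, _, hn, fun hmn' => ?_⟩
  rw [(hsemi.iterate_right m).eq, (hsemi.iterate_right n).eq] at hmn'
  have hfin := finite_range_iterate_of_iterate_eq hmn hmn'
  have hdense : DenseRange fun k => g^[k] (h x₀) := by
    convert hs.denseRange.comp hx₀ hc using 1
    exact funext fun k => ((hsemi.iterate_right k).eq x₀).symm
  exact infinite_univ (by rw [← hdense.closure_range, hfin.isClosed.closure_eq]; exact hfin)

namespace AddCircle

theorem coe_eq_coe_iff_exists_int {a b : ℝ} : (a : 𝕊) = b ↔ ∃ n : ℤ, a = b + n := by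
  rw [← sub_eq_zero, ← coe_sub, coe_eq_zero_iff]
  simp only [zsmul_eq_mul, mul_one]
  exact exists_congr fun n => by constructor <;> intro h <;> linarith

theorem exists_lift {f : 𝕊 → 𝕊} (hf : Continuous f) :
    ∃ F : ℝ → ℝ, Continuous F ∧ ∀ x : ℝ, (F x : 𝕊) = f x := by
  obtain ⟨F, ⟨-, hF⟩, -⟩ := (isCoveringMap_coe (1 : ℝ)).existsUnique_continuousMap_lifts
    ⟨f ∘ ((↑) : ℝ → 𝕊), hf.comp continuous_quotient_mk'⟩ 0 _
    (QuotientAddGroup.mk_surjective (f 0)).choose_spec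
  exact ⟨F, F.continuous, congrFun hF⟩

theorem exists_int_map_add_one {F : ℝ → ℝ} (hF : Continuous F)
    (h : ∀ x : ℝ, (F (x + 1) : 𝕊) = F x) : ∃ d : ℤ, ∀ x, F (x + 1) = F x + d := by
  have hmem : ∀ x, -F x + F (x + 1) ∈ AddSubgroup.zmultiples (1 : ℝ) := fun x =>
    QuotientAddGroup.eq.mp (h x).symm
  have hconst : ∀ x, -F x + F (x + 1) = -F 0 + F (0 + 1) := fun x =>
    isPreconnected_univ.constant_of_mapsTo
      (SetLike.isDiscrete_iff_discreteTopology.mpr inferInstance)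
      (by fun_prop : Continuous fun x => -F x + F (x + 1)).continuousOn
      (fun x _ => hmem x) (mem_univ x) (mem_univ 0)
  obtain ⟨d, hd⟩ := AddSubgroup.mem_zmultiples_iff.mp (hmem 0)
  refine ⟨d, fun x => ?_⟩
  have := hconst x
  rw [← hd, zsmul_eq_mul, mul_one] at this
  linarith

theorem isLocalHomeomorph_lift {f : 𝕊 → 𝕊} (hf : IsLocalHomeomorph f) {F : ℝ → ℝ}
    (hFc : Continuous F) (hlift : ∀ x : ℝ, (F x : 𝕊) = f x) : IsLocalHomeomorph F := by
  refine .of_comp ?_ (isLocalHomeomorph_coe (1 : ℝ)) hFc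
  rw [show ((↑) : ℝ → 𝕊) ∘ F = f ∘ (↑) from funext hlift]
  exact hf.comp (isLocalHomeomorph_coe 1)

theorem exists_continuous_of_map_add_one {H : ℝ → ℝ} (hc : Continuous H)
    (h1 : ∀ x, H (x + 1) = H x + 1) : ∃ h : 𝕊 → 𝕊, Continuous h ∧ ∀ x : ℝ, (H x : 𝕊) = h x := by
  have hper : Periodic (fun x => (H x : 𝕊)) 1 := fun x => by simp only [h1, coe_add_period]
  exact ⟨hper.lift, continuous_quot_lift _ (continuous_quotient_mk'.comp hc), fun x => rfl⟩

theorem injective_of_lift {f : 𝕊 → 𝕊} {F : ℝ → ℝ} (hlift : ∀ x : ℝ, (F x : 𝕊) = f x)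
    (hF : Injective F) {d : ℤ} (hd : IsUnit d) (h : ∀ x, F (x + 1) = F x + d) :
    Injective f := by
  intro z w hzw
  obtain ⟨a, rfl⟩ := QuotientAddGroup.mk_surjective z
  obtain ⟨b, rfl⟩ := QuotientAddGroup.mk_surjective w
  rw [← hlift, ← hlift, coe_eq_coe_iff_exists_int] at hzw
  obtain ⟨n, hn⟩ := hzw
  have hdd : (d : ℝ) * d = 1 := by exact_mod_cast Int.isUnit_mul_self hd
  have hab : a = b + (n * d : ℤ) := hF <| by
    rw [hn, map_add_int_mul h, Int.cast_mul, mul_assoc, hdd, mul_one]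
  exact coe_eq_coe_iff_exists_int.mpr ⟨n * d, hab⟩

theorem surjective_of_lift {f : 𝕊 → 𝕊} {F : ℝ → ℝ} (hlift : ∀ x : ℝ, (F x : 𝕊) = f x)
    (hF : Surjective F) : Surjective f := by
  intro z
  obtain ⟨y, rfl⟩ := QuotientAddGroup.mk_surjective z
  obtain ⟨x, rfl⟩ := hF y
  exact ⟨x, (hlift x).symm⟩

theorem bijective_of_lift {f : 𝕊 → 𝕊} {F : ℝ → ℝ} (hFc : Continuous F)
    (hlift : ∀ x : ℝ, (F x : 𝕊) = f x) (hF : Injective F) {d : ℤ} (hd : IsUnit d)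
    (h : ∀ x, F (x + 1) = F x + d) : Bijective f :=
  ⟨injective_of_lift hlift hF hd h,
    surjective_of_lift hlift (surjective_of_map_add_one hFc hd.ne_zero h)⟩

theorem strictMono_of_monotone_lift {H : ℝ → ℝ} (hmono : Monotone H) {h : 𝕊 → 𝕊}
    (hH : ∀ x : ℝ, (H x : 𝕊) = h x)
    (hne : ∀ U : Set 𝕊, IsOpen U → U.Nonempty → ∃ x ∈ U, ∃ y ∈ U, h x ≠ h y) : StrictMono H := by
  intro s t hlt
  refine (hmono hlt.le).lt_of_ne fun hst => ?_
  have hconst : ∀ x ∈ Ioo s t, H x = H s := fun x hx =>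
    le_antisymm (hst ▸ hmono hx.2.le) (hmono hx.1.le)
  obtain ⟨_, ⟨a, ha, rfl⟩, _, ⟨b, hb, rfl⟩, hab⟩ :=
    hne _ (QuotientAddGroup.isOpenMap_coe _ isOpen_Ioo) ((nonempty_Ioo.2 hlt).image _)
  exact hab (by rw [← hH, ← hH, hconst a ha, hconst b hb])

end AddCircle

open AddCircle in
/-- A transitive non-invertible local homeomorphism of the circle is
topologically conjugate to a linear expanding map `E_d : x ↦ d·x (mod 1)` with `|d| ≥ 2`. -/
theorem transitive_local_homeo_conjugate_to_expanding
    (f : AddCircle (1 : ℝ) → AddCircle (1 : ℝ))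
    (hlocal : IsLocalHomeomorph f)
    (hninv : ¬ Function.Bijective f)
    (htrans : ∃ x₀, Dense (Set.range fun n : ℕ => f^[n] x₀)) :
    ∃ d : ℤ, 2 ≤ |d| ∧ ∃ h : AddCircle (1 : ℝ) ≃ₜ AddCircle (1 : ℝ),
      ∀ x, h (f x) = d • h x := by
  obtain ⟨x₀, hx₀⟩ := htrans
  obtain ⟨F, hFc, hFf⟩ := exists_lift hlocal.continuous
  obtain ⟨d, hFd⟩ := exists_int_map_add_one hFc fun x => by rw [hFf, hFf, coe_add_period]
  have hFinj : Injective F :=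
    hFc.injective_of_isOpenMap (isLocalHomeomorph_lift hlocal hFc hFf).isOpenMap
  have hd0 : d ≠ 0 := by
    rintro rfl
    simpa using hFinj (by simpa using hFd 0 : F (0 + 1) = F 0)
  have hd : 2 ≤ |d| := by
    have hunit : ¬ IsUnit d := fun hu => hninv (bijective_of_lift hFc hFf hFinj hu hFd)
    rw [Int.isUnit_iff] at hunit
    rw [Int.abs_eq_natAbs]
    omega
  obtain ⟨H, hHc, hHmono, hH1, hHF⟩ := exists_monotone_semiconj_mul hFc
    ((hFc.strictMono_of_inj hFinj).imp StrictMono.monotone StrictAnti.antitone) hFd (by omega)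
  obtain ⟨h, hc, hH⟩ := exists_continuous_of_map_add_one hHc hH1
  have hsemi : Semiconj h f (d • ·) := fun z => by
    obtain ⟨x, rfl⟩ := QuotientAddGroup.mk_surjective z
    rw [← hFf, ← hH, ← hH, hHF, ← zsmul_eq_mul, coe_zsmul]
  have hH1' : ∀ x, H (x + 1) = H x + (1 : ℤ) := by simpa using hH1
  have hsurj : Surjective h :=
    surjective_of_lift hH (surjective_of_map_add_one hHc one_ne_zero hH1')
  have hHinj : Injective H := (strictMono_of_monotone_lift hHmono hH fun _ =>
    hsemi.exists_ne_of_denseRange_iterate hc hsurj hx₀).injective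
  exact ⟨d, hd, hc.homeoOfEquivCompactToT2
    (f := .ofBijective h (bijective_of_lift hHc hH hHinj isUnit_one hH1')), hsemi⟩
end

section
/- Let f: S¹ → S¹ be a continuous circle map of degree d with |d| ≥ 2, semiconjugate to the linear expanding map E_d via a monotone degree-one surjection h (i.e., h∘f = E_d∘h). If f is transitive, then h is injective, hence a conjugacy. -/
/-!
If `h` is not injective, monotonicity of its lift `H` yields an open arc `U` on which `h` is
constant. A dense orbit of `f` enters `U` at two different times `p ≠ q`, so
`E_d^p (h x₀) = E_d^q (h x₀)` and the `E_d`-orbit of `h x₀`, which is the `h`-image of the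
`f`-orbit of `x₀`, is finite. A finite set is closed, so by continuity and density it contains
the whole image of `h`, which is the circle.
-/

open Set Function

theorem Dense.exists_ne_iterate_mem {X : Type*} [TopologicalSpace X] [T1Space X]
    {f : X → X} {x₀ : X} (hd : Dense (range fun n ↦ f^[n] x₀)) {U : Set X} (hU : IsOpen U)
    (hUnt : U.Nontrivial) : ∃ p q, p ≠ q ∧ f^[p] x₀ ∈ U ∧ f^[q] x₀ ∈ U := by
  obtain ⟨_, ⟨p, rfl⟩, hp⟩ := hd.exists_mem_open hU hUnt.nonempty
  obtain ⟨_, ⟨q, rfl⟩, hq, hqp⟩ :=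
    hd.exists_mem_open (hU.sdiff isClosed_singleton) (hUnt.exists_ne (f^[p] x₀))
  exact ⟨p, q, fun hpq ↦ hqp (hpq ▸ rfl), hp, hq⟩

namespace Function

theorem finite_range_iterate_of_iterate_eq {α : Type*} {g : α → α} {y : α} {p q : ℕ}
    (hpq : p ≠ q) (heq : g^[p] y = g^[q] y) : (range fun n ↦ g^[n] y).Finite := by
  wlog hlt : p < q generalizing p q
  · exact this hpq.symm heq.symm (hpq.symm.lt_of_le (not_lt.1 hlt))
  have hper : IsPeriodicPt g (q - p) (g^[p] y) := by
    rw [IsPeriodicPt, IsFixedPt, ← iterate_add_apply, Nat.sub_add_cancel hlt.le, heq]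
  refine ((finite_Iio q).image fun n ↦ g^[n] y).subset ?_
  rintro _ ⟨n, rfl⟩
  rcases lt_or_ge n p with hn | hn
  · exact ⟨n, hn.trans hlt, rfl⟩
  · obtain ⟨m, rfl⟩ := Nat.exists_eq_add_of_le hn
    refine ⟨m % (q - p) + p, ?_, ?_⟩
    · have := Nat.mod_lt m (Nat.sub_pos_of_lt hlt)
      simp only [mem_Iio]
      omega
    · simp only [iterate_add_apply, hper.iterate_mod_apply, add_comm p m]

theorem Semiconj.finite_range_of_subsingleton_image {X Y : Type*} [TopologicalSpace X]
    [T1Space X] [TopologicalSpace Y] [T1Space Y] {f : X → X} {g : Y → Y} {h : X → Y}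
    (hsc : Semiconj h f g) (hh : Continuous h) {x₀ : X} (hd : Dense (range fun n ↦ f^[n] x₀))
    {U : Set X} (hU : IsOpen U) (hUnt : U.Nontrivial) (hhU : (h '' U).Subsingleton) :
    (range h).Finite := by
  have horbit : h '' (range fun n ↦ f^[n] x₀) = range fun n ↦ g^[n] (h x₀) := by
    rw [← range_comp]
    exact congrArg range (funext fun n ↦ (hsc.iterate_right n).eq x₀)
  obtain ⟨p, q, hpq, hp, hq⟩ := hd.exists_ne_iterate_mem hU hUnt
  have hfin : (range fun n ↦ g^[n] (h x₀)).Finite := by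
    refine finite_range_iterate_of_iterate_eq hpq ?_
    rw [← (hsc.iterate_right p).eq, ← (hsc.iterate_right q).eq]
    exact hhU (mem_image_of_mem h hp) (mem_image_of_mem h hq)
  refine hfin.subset ((hh.range_subset_closure_image_dense hd).trans ?_)
  rw [horbit, hfin.isClosed.closure_eq]

end Function

namespace AddCircle

variable {p : ℝ} [Fact (0 < p)]

theorem exists_lt_lt_add_of_ne {a b : AddCircle p} (hab : a ≠ b) :
    ∃ A B : ℝ, (A : AddCircle p) = a ∧ (B : AddCircle p) = b ∧ A < B ∧ B < A + p := by
  obtain ⟨A, rfl⟩ := QuotientAddGroup.mk_surjective a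
  obtain ⟨hAB, hBA⟩ := (equivIco p A b).2
  refine ⟨A, equivIco p A b, rfl, coe_equivIco, hAB.lt_of_ne ?_, hBA⟩
  rintro hA
  exact hab (hA ▸ coe_equivIco)

theorem infinite_image_coe_Ioo {s t : ℝ} (hst : s < t) (hts : t ≤ s + p) :
    ((↑) '' Ioo s t : Set (AddCircle p)).Infinite := by
  refine (Ioo_infinite hst).image fun x hx y hy hxy ↦ ?_
  have hIco : Ioo s t ⊆ Ico s (s + p) := fun z hz ↦ ⟨hz.1.le, hz.2.trans_le hts⟩
  exact (coe_eq_coe_iff_of_mem_Ico (hIco hx) (hIco hy)).1 hxy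

end AddCircle

theorem Monotone.exists_const_on_Ioo_of_coe_eq {H : ℝ → ℝ} (hHm : Monotone H)
    (hHdeg : ∀ x, H (x + 1) = H x + 1) {A B : ℝ} (hAB : A < B) (hBA : B < A + 1)
    (hcoe : (H A : AddCircle (1 : ℝ)) = H B) :
    ∃ s t, s < t ∧ t ≤ s + 1 ∧ ∀ x ∈ Ioo s t, H x = H s := by
  have hle : H A ≤ H B := hHm hAB.le
  have hle_add : H B ≤ H A + 1 := hHdeg A ▸ hHm hBA.le
  rcases hle_add.lt_or_eq with hlt | heq
  · have heq : H A = H B :=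
      (AddCircle.coe_eq_coe_iff_of_mem_Ico ⟨le_rfl, lt_add_one _⟩ ⟨hle, hlt⟩).1 hcoe
    exact ⟨A, B, hAB, hBA.le, fun x hx ↦
      le_antisymm (heq ▸ hHm hx.2.le) (hHm hx.1.le)⟩
  · exact ⟨B, A + 1, hBA, by linarith, fun x hx ↦
      le_antisymm ((hHm hx.2.le).trans (hHdeg A ▸ heq.ge)) (hHm hx.1.le)⟩

theorem semiconjugacy_injective_of_transitive_general
    (d : ℤ)
    (f h : AddCircle (1 : ℝ) → AddCircle (1 : ℝ))
    (hh : Continuous h) (hhsurj : Function.Surjective h)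
    -- `H` is a monotone degree-one lift of `h`:
    (H : ℝ → ℝ) (hHm : Monotone H)
    (hHlift : ∀ x : ℝ, h (x : AddCircle (1 : ℝ)) = (H x : AddCircle (1 : ℝ)))
    (hHdeg : ∀ x : ℝ, H (x + 1) = H x + 1)
    -- semiconjugacy to `E_d`:
    (hsemi : ∀ x, h (f x) = d • h x)
    -- transitivity of `f`:
    (htrans : ∃ x₀, Dense (Set.range fun n : ℕ => f^[n] x₀)) :
    Function.Injective h := by
  intro a b hab
  by_contra hne
  obtain ⟨A, B, rfl, rfl, hAB, hBA⟩ := AddCircle.exists_lt_lt_add_of_ne hne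
  obtain ⟨s, t, hst, hts, hconst⟩ :=
    hHm.exists_const_on_Ioo_of_coe_eq hHdeg hAB hBA (by rw [← hHlift, ← hHlift, hab])
  have hU : ((↑) '' Ioo s t : Set (AddCircle (1 : ℝ))).Infinite :=
    AddCircle.infinite_image_coe_Ioo hst hts
  have hhU : (h '' ((↑) '' Ioo s t)).Subsingleton := by
    rintro _ ⟨_, ⟨x, hx, rfl⟩, rfl⟩ _ ⟨_, ⟨y, hy, rfl⟩, rfl⟩
    rw [hHlift, hHlift, hconst x hx, hconst y hy]
  obtain ⟨x₀, hx₀⟩ := htrans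
  have hfin : (range h).Finite := Semiconj.finite_range_of_subsingleton_image (g := (d • ·))
    hsemi hh hx₀ (QuotientAddGroup.isOpenMap_coe _ isOpen_Ioo) hU.nontrivial hhU
  exact hU (hfin.subset (hhsurj.range_eq ▸ subset_univ _))

/-- If a degree-`d` circle map (`|d| ≥ 2`) is semiconjugate to the linear
expanding map `E_d` by a monotone degree-one surjection `h`, and `f` is transitive, then
`h` is injective (hence a conjugacy). -/
theorem semiconjugacy_injective_of_transitive
    (d : ℤ) (hd : 2 ≤ |d|)
    (f h : AddCircle (1 : ℝ) → AddCircle (1 : ℝ))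
    (hf : Continuous f) (hh : Continuous h) (hhsurj : Function.Surjective h)
    -- `F` is a lift of `f` of degree `d`:
    (F : ℝ → ℝ) (hFc : Continuous F)
    (hFlift : ∀ x : ℝ, f (x : AddCircle (1 : ℝ)) = (F x : AddCircle (1 : ℝ)))
    (hFdeg : ∀ x : ℝ, F (x + 1) = F x + d)
    -- `H` is a monotone degree-one lift of `h`:
    (H : ℝ → ℝ) (hHc : Continuous H) (hHm : Monotone H)
    (hHlift : ∀ x : ℝ, h (x : AddCircle (1 : ℝ)) = (H x : AddCircle (1 : ℝ)))
    (hHdeg : ∀ x : ℝ, H (x + 1) = H x + 1)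
    -- semiconjugacy to `E_d`:
    (hsemi : ∀ x, h (f x) = d • h x)
    -- transitivity of `f`:
    (htrans : ∃ x₀, Dense (Set.range fun n : ℕ => f^[n] x₀)) :
    Function.Injective h :=
  semiconjugacy_injective_of_transitive_general d f h hh hhsurj H hHm hHlift hHdeg hsemi htrans
end

section
/- Let f: S¹ → S¹ be a transitive continuous circle map without turning points (i.e., a monotone local homeomorphism) that is not a homeomorphism. Then for every nonempty open interval I ⊂ S¹ and every x ∈ S¹, there exist n > 0 and y ∈ I with f^n(y) = x; in other words, ⋃_{n≥0} f^n(I) = S¹. -/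
/-!
Suppose the open forward-invariant set `U = ⋃_{n ≥ 1} fⁿ(I)` is not the whole circle. The set
`W` of points whose orbit eventually enters `U` is open, satisfies `f⁻¹(W) = W`, contains the
dense orbit, and by compactness misses a point. Every component of `W` is an arc whose image
misses a point, so `f` is injective on it: lifted to `ℝ` and read in a chart of the punctured
circle, `f` becomes a locally injective continuous real function on an interval. On the other
hand `f` is a covering map which is not injective, so every point of `W` has two preimages in
`W`, lying in different components. By density the components are the components `cₙ` of the
orbit points `fⁿ(x₀)`, and `f` maps `cₙ` into `cₙ₊₁`; so they form a finite cycle in which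
every component has two predecessors, which is absurd.
-/

open Set Function Topology

theorem Function.Periodic.finite_range_nat {α : Type*} {c : ℕ → α} {p : ℕ} (hc : Periodic c p)
    (hp : 0 < p) : (range c).Finite :=
  ((finite_lt_nat p).image c).subset <| by
    rintro _ ⟨n, rfl⟩
    exact ⟨n % p, Nat.mod_lt n hp, hc.map_mod_nat n⟩

theorem not_forall_exists_two_predecessors {α : Type*} (c : ℕ → α)
    (hsucc : ∀ a b, c a = c b → c (a + 1) = c (b + 1)) :
    ¬ ∀ m, ∃ k k', c k ≠ c k' ∧ c (k + 1) = c m ∧ c (k' + 1) = c m := by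
  intro hpred
  obtain ⟨p, -, -, hp, -⟩ := hpred 0
  have hper : Periodic c (p + 1) := by
    intro n
    induction n with
    | zero => simpa using hp
    | succ n ih => rw [add_right_comm]; exact hsucc _ _ ih
  have : Finite (range c) := (hper.finite_range_nat p.succ_pos).to_subtype
  -- The successor map on the finite set `range c` is surjective, hence injective.
  let σ : range c → range c := fun C => ⟨c (C.2.choose + 1), mem_range_self _⟩
  have hσ (n : ℕ) : σ ⟨c n, mem_range_self n⟩ = ⟨c (n + 1), mem_range_self _⟩ :=
    Subtype.ext (hsucc _ _ (mem_range_self n).choose_spec)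
  have hσ_surj : Surjective σ := by
    rintro ⟨_, m, rfl⟩
    obtain ⟨k, -, -, hk, -⟩ := hpred m
    exact ⟨_, (hσ k).trans (Subtype.ext hk)⟩
  obtain ⟨k, k', hne, hk, hk'⟩ := hpred 0
  have hσ_eq : σ ⟨c k, mem_range_self k⟩ = σ ⟨c k', mem_range_self k'⟩ := by
    rw [hσ, hσ, Subtype.mk.injEq, hk, hk']
  exact hne (congrArg Subtype.val (Finite.injective_iff_surjective.mpr hσ_surj hσ_eq))

theorem IsOpenMap.iterate {X : Type*} [TopologicalSpace X] {f : X → X} (hf : IsOpenMap f)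
    (n : ℕ) : IsOpenMap f^[n] := by
  induction n with
  | zero => exact IsOpenMap.id
  | succ n ih => rw [iterate_succ]; exact ih.comp hf

theorem mapsTo_iUnion_image_iterate_succ {α : Type*} (f : α → α) (s : Set α) :
    MapsTo f (⋃ n, f^[n + 1] '' s) (⋃ n, f^[n + 1] '' s) := fun _ hz => by
  obtain ⟨n, y, hy, rfl⟩ := mem_iUnion.mp hz
  exact mem_iUnion.mpr ⟨n + 1, y, hy, iterate_succ_apply' f (n + 1) y⟩

theorem preimage_iUnion_preimage_iterate {α : Type*} {f : α → α} {U : Set α}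
    (hfU : MapsTo f U U) : f ⁻¹' ⋃ n, f^[n] ⁻¹' U = ⋃ n, f^[n] ⁻¹' U := by
  ext z
  simp only [mem_preimage, mem_iUnion]
  constructor
  · rintro ⟨n, hn⟩
    exact ⟨n + 1, by rwa [iterate_succ_apply]⟩
  · rintro ⟨n, hn⟩
    exact ⟨n, by rw [← iterate_succ_apply, iterate_succ_apply']; exact hfU hn⟩

theorem iUnion_preimage_iterate_ne_univ {X : Type*} [TopologicalSpace X] [CompactSpace X]
    {f : X → X} (hf : Continuous f) (hsurj : Surjective f) {U : Set X} (hU : IsOpen U)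
    (hfU : MapsTo f U U) (hne : U ≠ univ) : ⋃ n, f^[n] ⁻¹' U ≠ univ := by
  intro h
  have hmono : Monotone fun n => f^[n] ⁻¹' U := fun m n hmn z hz => by
    obtain ⟨k, rfl⟩ := Nat.exists_eq_add_of_le' hmn
    simpa only [mem_preimage, iterate_add_apply] using hfU.iterate k hz
  obtain ⟨n, hn⟩ := isCompact_univ.elim_directed_cover _ (fun n => hU.preimage (hf.iterate n))
    h.ge hmono.directed_le
  refine hne (eq_univ_of_forall fun y => ?_)
  obtain ⟨z, rfl⟩ := hsurj.iterate n y
  exact hn (mem_univ z)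

theorem not_dense_orbit_of_injOn_connectedComponentIn {X : Type*} [TopologicalSpace X]
    [LocallyConnectedSpace X] {f : X → X} (hf : Continuous f) {W : Set X} (hW : IsOpen W)
    (hfW : MapsTo f W W) (hinj : ∀ v ∈ W, InjOn f (connectedComponentIn W v))
    (htwo : ∀ y ∈ W, ∃ a ∈ W, ∃ b ∈ W, a ≠ b ∧ f a = y ∧ f b = y) {x₀ : X} (hx₀ : x₀ ∈ W) :
    ¬ Dense (range fun n => f^[n] x₀) := by
  intro hdense
  set c : ℕ → Set X := fun n => connectedComponentIn W (f^[n] x₀)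
  have horb (n : ℕ) : f^[n] x₀ ∈ W := hfW.iterate n hx₀
  have hcomp : ∀ v ∈ W, ∃ n, connectedComponentIn W v = c n := fun v hv => by
    obtain ⟨_, ⟨n, rfl⟩, hn⟩ :=
      hdense.exists_mem_open hW.connectedComponentIn ⟨v, mem_connectedComponentIn hv⟩
    exact ⟨n, connectedComponentIn_eq hn⟩
  have hsucc : ∀ n, ∀ v ∈ c n, c (n + 1) = connectedComponentIn W (f v) := fun n v hv => by
    refine connectedComponentIn_eq ?_
    rw [iterate_succ_apply']
    exact connectedComponentIn_mono _ hfW.image_subset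
      (hf.continuousOn.image_connectedComponentIn_subset (horb n) ⟨v, hv, rfl⟩)
  refine not_forall_exists_two_predecessors c (fun a b hab => ?_) (fun m => ?_)
  · rw [hsucc b (f^[a] x₀) (hab ▸ mem_connectedComponentIn (horb a)),
      ← iterate_succ_apply' f a x₀]
  · obtain ⟨a, ha, b, hb, hab, hfa, hfb⟩ := htwo _ (horb m)
    obtain ⟨k, hk⟩ := hcomp a ha
    obtain ⟨k', hk'⟩ := hcomp b hb
    refine ⟨k, k', fun h => hab (hinj a ha (mem_connectedComponentIn ha) ?_ (hfa.trans hfb.symm)),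
      by rw [hsucc k a (hk ▸ mem_connectedComponentIn ha), hfa],
      by rw [hsucc k' b (hk' ▸ mem_connectedComponentIn hb), hfb]⟩
    rw [hk, h, ← hk']
    exact mem_connectedComponentIn hb

theorem IsLocallyInjective.injOn_Icc {α δ : Type*} [ConditionallyCompleteLinearOrder α]
    [DenselyOrdered α] [TopologicalSpace α] [OrderTopology α] [LinearOrder δ] [TopologicalSpace δ]
    [OrderTopology δ] {g : α → δ} {a b : α} (hloc : IsLocallyInjective g)
    (hg : ContinuousOn g (Icc a b)) : InjOn g (Icc a b) := by
  intro x hx y hy hxy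
  by_contra hne
  wlog hlt : x < y generalizing x y
  · exact this hy hx hxy.symm (Ne.symm hne) (lt_of_le_of_ne (not_lt.mp hlt) (Ne.symm hne))
  have hsub : Icc x y ⊆ Icc a b := Icc_subset_Icc hx.1 hy.2
  obtain ⟨c, hc, hext⟩ := exists_Ioo_extr_on_Icc hlt (hg.mono hsub) hxy
  obtain ⟨U, hU, hinj⟩ := isLocallyInjective_iff_nhds.mp hloc c
  obtain ⟨l, r, hclr, hlr⟩ := (mem_nhds_iff_exists_Ioo_subset' ⟨x, hc.1⟩ ⟨y, hc.2⟩).mp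
    (Filter.inter_mem hU (Ioo_mem_nhds hc.1 hc.2))
  obtain ⟨l', hl'⟩ := exists_between hclr.1
  obtain ⟨r', hr'⟩ := exists_between hclr.2
  have hl'_lr : l' ∈ Ioo l r := ⟨hl'.1, hl'.2.trans hclr.2⟩
  have hr'_lr : r' ∈ Ioo l r := ⟨hclr.1.trans hr'.1, hr'.2⟩
  have hl'_mem : l' ∈ Icc x y := Ioo_subset_Icc_self (hlr hl'_lr).2
  have hr'_mem : r' ∈ Icc x y := Ioo_subset_Icc_self (hlr hr'_lr).2
  have hmono := (hg.mono ((hlr.trans inter_subset_right).trans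
    (Ioo_subset_Icc_self.trans hsub))).strictMonoOn_of_injOn_Ioo (hclr.1.trans hclr.2)
    (hinj.mono (hlr.trans inter_subset_left))
  rcases hmono with hmono | hanti <;> rcases hext with hmin | hmax
  · exact (hmono hl'_lr hclr hl'.2).not_ge (hmin hl'_mem)
  · exact (hmono hclr hr'_lr hr'.1).not_ge (hmax hr'_mem)
  · exact (hanti hclr hr'_lr hr'.1).not_ge (hmin hr'_mem)
  · exact (hanti hl'_lr hclr hl'.2).not_ge (hmax hl'_mem)

section Covering

variable {E X : Type*} [TopologicalSpace E] [TopologicalSpace X] [PathConnectedSpace X]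
  {p : E → X}

theorem IsCoveringMap.nonempty_equiv_fiber (hp : IsCoveringMap p) (x y : X) :
    Nonempty (p ⁻¹' {x} ≃ p ⁻¹' {y}) :=
  ⟨Equiv.ofBijective _ (hp.monodromy_bijective (.mk (PathConnectedSpace.somePath x y)))⟩

theorem IsCoveringMap.surjective_of_nonempty [Nonempty E] (hp : IsCoveringMap p) :
    Surjective p := by
  intro y
  obtain ⟨e⟩ := ‹Nonempty E›
  obtain ⟨φ⟩ := hp.nonempty_equiv_fiber (p e) y
  exact ⟨φ ⟨e, rfl⟩, (φ ⟨e, rfl⟩).2⟩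

theorem IsCoveringMap.exists_ne_of_not_injective (hp : IsCoveringMap p) (h : ¬ Injective p)
    (y : X) : ∃ a b, a ≠ b ∧ p a = y ∧ p b = y := by
  obtain ⟨a, b, hab, hne⟩ : ∃ a b, p a = p b ∧ a ≠ b := by simpa [Injective] using h
  obtain ⟨φ⟩ := hp.nonempty_equiv_fiber (p a) y
  refine ⟨φ ⟨a, rfl⟩, φ ⟨b, hab.symm⟩, fun h => hne ?_, (φ _).2, (φ _).2⟩
  exact congrArg Subtype.val (φ.injective (Subtype.ext h))

end Covering

namespace AddCircle

instance locallyPathConnectedSpace (p : ℝ) : LocallyPathConnectedSpace (AddCircle p) :=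
  inferInstanceAs (LocallyPathConnectedSpace (Quotient _))

variable {p : ℝ} [Fact (0 < p)] {f : AddCircle p → AddCircle p}

theorem injOn_of_isLocalHomeomorph (hf : IsLocalHomeomorph f) {C : Set (AddCircle p)}
    (hCo : IsOpen C) (hCc : IsPreconnected C) {q : AddCircle p} (hq : q ∉ f '' C) :
    InjOn f C := by
  intro a ha b hb hab
  have hpath : JoinedIn C a b :=
    (hCo.isConnected_iff_isPathConnected.mp ⟨⟨a, ha⟩, hCc⟩).joinedIn a ha b hb
  obtain ⟨u, rfl⟩ := QuotientAddGroup.mk_surjective a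
  obtain ⟨Γ, hΓ, hΓ0⟩ := (isCoveringMap_coe p).exists_path_lifts hpath.somePath u (by simp)
  have hΓ_apply (t) : ((Γ t : ℝ) : AddCircle p) = hpath.somePath t := congrFun hΓ t
  obtain ⟨q', rfl⟩ := QuotientAddGroup.mk_surjective q
  -- `f` read in the chart `equivIco p q'` of the circle punctured at `q`
  set ψ : ℝ → ℝ := fun t => equivIco p q' (f t)
  have hψ_loc : IsLocallyInjective ψ := fun t => by
    obtain ⟨U, hUo, htU, hinj⟩ := (hf.comp (isLocalHomeomorph_coe p)).isLocallyInjective t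
    exact ⟨U, hUo, htU,
      (Subtype.val_injective.comp (equivIco p q').injective).comp_injOn hinj⟩
  have hΓ_range : uIcc (Γ 0) (Γ 1) ⊆ range Γ := (isPreconnected_range Γ.continuous).ordConnected
    |>.uIcc_subset (mem_range_self 0) (mem_range_self 1)
  have hψ_cont : ContinuousOn ψ (uIcc (Γ 0) (Γ 1)) := fun t ht => by
    obtain ⟨s, rfl⟩ := hΓ_range ht
    have hne : f (Γ s) ≠ q' := fun h => hq ⟨_, (hΓ_apply s).symm ▸ hpath.somePath_mem s, h⟩
    have hchart : ContinuousAt (fun z => (equivIco p q' z : ℝ)) (f (Γ s)) :=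
      continuous_subtype_val.continuousAt.comp (continuousAt_equivIco p q' hne)
    exact ((hchart.comp hf.continuous.continuousAt).comp
      continuous_quotient_mk'.continuousAt).continuousWithinAt
  have hΓ01 : Γ 0 = Γ 1 := hψ_loc.injOn_Icc hψ_cont left_mem_uIcc right_mem_uIcc <| by
    simp only [ψ, hΓ_apply, Path.source, Path.target, hab]
  rw [← hΓ0, hΓ01, hΓ_apply, Path.target]

theorem not_dense_orbit_of_preimage_eq (hf : IsLocalHomeomorph f) (hninj : ¬ Injective f)
    {W : Set (AddCircle p)} (hWo : IsOpen W) (hW : f ⁻¹' W = W) (hne : W ≠ univ)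
    {x₀ : AddCircle p} (hx₀ : x₀ ∈ W) : ¬ Dense (range fun n => f^[n] x₀) := by
  obtain ⟨q, hq⟩ := nonempty_compl.mpr hne
  have hfW : MapsTo f W W := fun z hz => (hW.symm ▸ hz : z ∈ f ⁻¹' W)
  have htwo := (isLocalHomeomorph_iff_isCoveringMap.mp hf).exists_ne_of_not_injective hninj
  refine not_dense_orbit_of_injOn_connectedComponentIn hf.continuous hWo hfW (fun v _ => ?_)
    (fun y hy => ?_) hx₀
  · refine injOn_of_isLocalHomeomorph hf hWo.connectedComponentIn
      isPreconnected_connectedComponentIn (q := q) ?_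
    rintro ⟨z, hz, rfl⟩
    exact hq (hfW (connectedComponentIn_subset _ _ hz))
  · obtain ⟨a, b, hab, ha, hb⟩ := htwo y
    have hfiber : f ⁻¹' {y} ⊆ W := fun z hz => hW ▸ (mem_singleton_iff.mp hz ▸ hy : f z ∈ W)
    exact ⟨a, hfiber ha, b, hfiber hb, hab, ha, hb⟩

end AddCircle

theorem forward_images_of_interval_cover_general
    (f : AddCircle (1 : ℝ) → AddCircle (1 : ℝ))
    (hlocal : IsLocalHomeomorph f)
    (hninv : ¬ Function.Bijective f)
    (htrans : ∃ x₀, Dense (Set.range fun n : ℕ => f^[n] x₀)) :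
    ∀ I : Set (AddCircle (1 : ℝ)), IsOpen I → IsConnected I →
      ∀ x : AddCircle (1 : ℝ), ∃ n : ℕ, 0 < n ∧ ∃ y ∈ I, f^[n] y = x := by
  obtain ⟨x₀, hx₀⟩ := htrans
  intro I hIo hIc x
  have hf := hlocal.continuous
  have hsurj : Surjective f :=
    (isLocalHomeomorph_iff_isCoveringMap.mp hlocal).surjective_of_nonempty
  set U := ⋃ n, f^[n + 1] '' I
  by_cases hU : U = univ
  · obtain ⟨n, y, hy, rfl⟩ := mem_iUnion.mp (hU ▸ mem_univ x)
    exact ⟨n + 1, n.succ_pos, y, hy, rfl⟩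
  have hUo : IsOpen U := isOpen_iUnion fun n => hlocal.isOpenMap.iterate (n + 1) I hIo
  have hfU : MapsTo f U U := mapsTo_iUnion_image_iterate_succ f I
  obtain ⟨_, ⟨n, rfl⟩, hn⟩ := hx₀.exists_mem_open hUo
    ((hIc.nonempty.image _).mono (subset_iUnion (fun n => f^[n + 1] '' I) 0))
  exact absurd hx₀ <| AddCircle.not_dense_orbit_of_preimage_eq hlocal
    (fun hinj => hninv ⟨hinj, hsurj⟩) (isOpen_iUnion fun n => hUo.preimage (hf.iterate n))
    (preimage_iUnion_preimage_iterate hfU) (iUnion_preimage_iterate_ne_univ hf hsurj hUo hfU hU)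
    (mem_iUnion.mpr ⟨n, hn⟩)

/-- For a transitive monotone local homeomorphism of the circle (no
turning points) which is not a homeomorphism, every nonempty open interval eventually
covers every point: for each open connected `I` and each `x` there are `n > 0` and `y ∈ I`
with `fⁿ(y) = x`. -/
theorem forward_images_of_interval_cover
    (f : AddCircle (1 : ℝ) → AddCircle (1 : ℝ))
    (hf : Continuous f) (hlocal : IsLocalHomeomorph f)
    (hninv : ¬ Function.Bijective f)
    (htrans : ∃ x₀, Dense (Set.range fun n : ℕ => f^[n] x₀)) :
    ∀ I : Set (AddCircle (1 : ℝ)), IsOpen I → IsConnected I →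
      ∀ x : AddCircle (1 : ℝ), ∃ n : ℕ, 0 < n ∧ ∃ y ∈ I, f^[n] y = x :=
  forward_images_of_interval_cover_general f hlocal hninv htrans
end
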